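/- arXiv:1111.4186 — 2 statements merged into one kernel-verified Lean document; each statement's English description precedes it below -/
import Mathlib

section
/- Let (R,m) be a one-dimensional Noetherian local ring and q=(x) a parameter ideal. Let l = min{ i : ((x^{n+1}):x^{n}) = ((x^{i+1}):x^{i}) for all n ≥ i } and x̃ = ((x^{l+1}):x^{l}). Then the first Hilbert coefficient satisfies e_1(q) = Σ_{i=0}^{l−1} ( λ_R(R/x̃) − λ_R(R/((x^{i+1}):x^{i})) ). -/
set_option synthInstance.maxHeartbeats 1000000
set_option maxHeartbeats 1000000

open IsLocalRing Polynomial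

/-- The length `λ_R(M)` of an `R`-module `M`, as an integer (the Krull dimension of
its lattice of submodules; for a finite-length module this is the usual length). -/
noncomputable def modLength (R M : Type*) [CommRing R] [AddCommGroup M] [Module R M] : ℤ :=
  ((Order.krullDim (Submodule R M)).unbotD 0).toNat

/-- The binomial coefficient `binom(x, k)` for `x : ℚ`, `k : ℕ`. -/
noncomputable def binomQ (x : ℚ) (k : ℕ) : ℚ :=
  (∏ j ∈ Finset.range k, (x - j)) / (Nat.factorial k)

/-- The function `n ↦ ∑_{i=0}^{d} (-1)^i eᵢ binom(n+d-i-1, d-i)`; when the `e i` are the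
Hilbert coefficients of an ideal this is its Hilbert–Samuel polynomial. -/
noncomputable def hilbPoly (d : ℕ) (e : ℕ → ℤ) (n : ℤ) : ℚ :=
  ∑ i ∈ Finset.range (d + 1), (-1 : ℚ) ^ i * (e i) * binomQ ((n : ℚ) + d - i - 1) (d - i)

/-- The Hilbert function `H_q(n) = λ_R(R/qⁿ)` (with `H_q(n) = 0` for `n ≤ 0`). -/
noncomputable def hilbFn (R : Type*) [CommRing R] (q : Ideal R) (n : ℤ) : ℚ :=
  (modLength R (R ⧸ q ^ n.toNat) : ℚ)

/-- The first difference operator `Δ` on functions `ℤ → ℚ`: `Δ(f)(n) = f(n+1) - f(n)`. -/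
noncomputable def deltaFn (f : ℤ → ℚ) : ℤ → ℚ := fun n => f (n + 1) - f n

/-- The colon ideal `((x^{i+1}) : x^i)`. -/
noncomputable def colonPow (R : Type*) [CommRing R] (x : R) (i : ℕ) : Ideal R :=
  (Ideal.span {x ^ (i + 1)}).colon (Ideal.span {x ^ i})

/-- The length `λ_R(J/I)` of the subquotient `J/I` (for ideals `I ⊆ J`). -/
noncomputable def quotLength (R : Type*) [CommRing R] (J I : Ideal R) : ℤ :=
  modLength R (↥J ⧸ Submodule.comap J.subtype I)

/-- `y` is a superficial element for `I`: there is `c ≥ 0` with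
`(I^{n+1} : y) ∩ I^c = I^n` for all `n ≥ c`. -/
def IsSuperficial (R : Type*) [CommRing R] (I : Ideal R) (y : R) : Prop :=
  ∃ c : ℕ, ∀ n ≥ c, (I ^ (n + 1)).colon (Ideal.span {y}) ⊓ I ^ c = I ^ n

/-- `q` is a parameter ideal of the `d`-dimensional local ring `R`: it is generated by a
system of `d` parameters, i.e. by `d` elements generating an `m`-primary ideal. -/
def IsParameterIdeal (R : Type*) [CommRing R] [IsLocalRing R] (d : ℕ) (q : Ideal R) : Prop :=
  (∃ f : Fin d → R, q = Ideal.span (Set.range f)) ∧ q.radical = maximalIdeal R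

/-- `depth R ≥ k`: there is an `R`-regular sequence of length `k` inside the maximal ideal. -/
def depthGE (R : Type*) [CommRing R] [IsLocalRing R] (k : ℕ) : Prop :=
  ∃ rs : List R, rs.length = k ∧ (∀ r ∈ rs, r ∈ maximalIdeal R) ∧
    RingTheory.Sequence.IsRegular R rs

/-- The ideal `I·R[It]` of the Rees algebra `R[It]`. -/
noncomputable def grKer (R : Type*) [CommRing R] (I : Ideal R) : Ideal (reesAlgebra I) :=
  Ideal.span {x : reesAlgebra I | ∃ a ∈ I, (x : R[X]) = Polynomial.C a}

/-- The associated graded ring `gr_I(R) = ⊕_{n≥0} Iⁿ/Iⁿ⁺¹`, realized as `R[It]/I·R[It]`. -/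
noncomputable abbrev grRing (R : Type*) [CommRing R] (I : Ideal R) :=
  reesAlgebra I ⧸ grKer R I

/-- The irrelevant ideal `gr_I(R)₊`, generated by the image `It` of the degree-one part. -/
noncomputable def grPlus (R : Type*) [CommRing R] (I : Ideal R) : Ideal (grRing R I) :=
  Ideal.span ((Ideal.Quotient.mk (grKer R I)) ''
    {x : reesAlgebra I | ∃ a ∈ I, (x : R[X]) = Polynomial.C a * Polynomial.X})

/-- `depth gr_I(R) = grade gr_I(R)₊ ≥ k`: there is a `gr_I(R)`-regular sequence of
length `k` contained in the irrelevant ideal. -/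
def grDepthGE (R : Type*) [CommRing R] (I : Ideal R) (k : ℕ) : Prop :=
  ∃ rs : List (grRing R I), rs.length = k ∧ (∀ r ∈ rs, r ∈ grPlus R I) ∧
    RingTheory.Sequence.IsRegular (grRing R I) rs

/-!
Multiplication by `xⁿ` gives an exact sequence
`0 → R/((xⁿ⁺¹):xⁿ) → R/(xⁿ⁺¹) → R/(xⁿ) → 0`,
so `λ(R/(x)ⁿ) = ∑_{i<n} λ(R/((xⁱ⁺¹):xⁱ))`. The colon ideals are constant from `l` on, so for
`n ≥ l` the Hilbert function is the linear function
`n λ(R/x̃) - ∑_{i<l} (λ(R/x̃) - λ(R/((xⁱ⁺¹):xⁱ)))`; comparing it with `e₀ n - e₁` gives the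
formula.
-/

lemma modLength_eq_toNat_length (R M : Type*) [CommRing R] [AddCommGroup M] [Module R M] :
    modLength R M = (Module.length R M).toNat := by
  rw [modLength, ← Module.coe_length, WithBot.unbotD_coe]

lemma Module.length_eq_length_quotient_ker_add_length_quotient_range {R M N : Type*} [Ring R]
    [AddCommGroup M] [Module R M] [AddCommGroup N] [Module R N] (φ : N →ₗ[R] M) :
    Module.length R M =
      Module.length R (N ⧸ LinearMap.ker φ) + Module.length R (M ⧸ LinearMap.range φ) := by
  rw [Module.length_eq_add_of_exact _ _ (Submodule.injective_subtype _)
    (Submodule.mkQ_surjective _) (LinearMap.exact_subtype_mkQ (LinearMap.range φ)),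
    φ.quotKerEquivRange.length_eq]

section colon

variable {R : Type*} [CommRing R]

noncomputable def mulPowQuot (x : R) (n : ℕ) : R →ₗ[R] R ⧸ Ideal.span {x} ^ (n + 1) :=
  (Ideal.span {x} ^ (n + 1)).mkQ ∘ₗ LinearMap.toSpanSingleton R R (x ^ n)

lemma ker_mulPowQuot (x : R) (n : ℕ) : LinearMap.ker (mulPowQuot x n) = colonPow R x n := by
  ext r
  simp only [mulPowQuot, LinearMap.mem_ker, LinearMap.comp_apply,
    LinearMap.toSpanSingleton_apply, smul_eq_mul, Submodule.mkQ_apply,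
    Submodule.Quotient.mk_eq_zero, Ideal.span_singleton_pow, colonPow,
    Ideal.mem_colon_span_singleton]

lemma range_mulPowQuot (x : R) (n : ℕ) :
    LinearMap.range (mulPowQuot x n) =
      Submodule.map (Ideal.span {x} ^ (n + 1)).mkQ (Ideal.span {x} ^ n) := by
  rw [mulPowQuot, LinearMap.range_comp, ← LinearMap.span_singleton_eq_range,
    Ideal.span_singleton_pow x n]

lemma length_quotient_span_pow_succ (x : R) (n : ℕ) :
    Module.length R (R ⧸ Ideal.span {x} ^ (n + 1)) =
      Module.length R (R ⧸ colonPow R x n) + Module.length R (R ⧸ Ideal.span {x} ^ n) := by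
  rw [Module.length_eq_length_quotient_ker_add_length_quotient_range (mulPowQuot x n),
    ker_mulPowQuot, range_mulPowQuot,
    (Submodule.quotientQuotientEquivQuotient _ _
      (Ideal.pow_le_pow_right n.le_succ)).length_eq]

lemma length_quotient_span_pow (x : R) (n : ℕ) :
    Module.length R (R ⧸ Ideal.span {x} ^ n) =
      ∑ i ∈ Finset.range n, Module.length R (R ⧸ colonPow R x i) := by
  induction n with
  | zero => simp [Module.length_eq_zero]
  | succ n ih => rw [length_quotient_span_pow_succ, ih, Finset.sum_range_succ, add_comm]

end colon

section IsLocalRing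

open IsLocalRing

variable {R : Type*} [CommRing R] [IsNoetherianRing R] [IsLocalRing R]

lemma length_quotient_ne_top_of_radical_eq_maximalIdeal {J : Ideal R}
    (hJ : J.radical = maximalIdeal R) : Module.length R (R ⧸ J) ≠ ⊤ := by
  have : IsArtinianRing (R ⧸ J) :=
    quotient_artinian_of_mem_minimalPrimes_of_isLocalRing J (by
      rw [← Ideal.radical_minimalPrimes, hJ, Ideal.minimalPrimes_eq_subsingleton_self]
      rfl)
  have : IsArtinian R (R ⧸ J) :=
    isArtinian_of_surjective_algebraMap (Ideal.Quotient.mk_surjective (I := J))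
  exact Module.length_ne_top

lemma modLength_quotient_span_pow {x : R} (hx : (Ideal.span {x}).radical = maximalIdeal R)
    (n : ℕ) : modLength R (R ⧸ Ideal.span {x} ^ n) =
      ∑ i ∈ Finset.range n, modLength R (R ⧸ colonPow R x i) := by
  have hfin (i : ℕ) : Module.length R (R ⧸ colonPow R x i) ≠ ⊤ := by
    have hle : Module.length R (R ⧸ colonPow R x i) ≤
        Module.length R (R ⧸ Ideal.span {x} ^ (i + 1)) := by
      rw [length_quotient_span_pow_succ]
      exact le_self_add
    refine ne_top_of_le_ne_top (length_quotient_ne_top_of_radical_eq_maximalIdeal ?_) hle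
    rw [Ideal.radical_pow _ i.succ_ne_zero, hx]
  simp only [modLength_eq_toNat_length, length_quotient_span_pow,
    ENat.toNat_sum fun i _ => hfin i, Nat.cast_sum]

end IsLocalRing

lemma Finset.sum_range_add_eq_of_eventually_const {M : Type*} [AddCommMonoid M] {f : ℕ → M}
    {l : ℕ} (hf : ∀ i ≥ l, f i = f l) (d : ℕ) :
    ∑ i ∈ range (l + d), f i = ∑ i ∈ range l, f i + d • f l := by
  rw [sum_range_add, sum_congr rfl fun i _ => hf (l + i) (Nat.le_add_right l i), sum_const,
    card_range]

lemma hilbPoly_one (e : ℕ → ℤ) (n : ℤ) : hilbPoly 1 e n = e 0 * n - e 1 := by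
  simp [hilbPoly, binomQ, Finset.sum_range_succ, ← sub_eq_add_neg]

theorem stmt1_general (R : Type*) [CommRing R] [IsNoetherianRing R] [IsLocalRing R]
    (x : R)
    (hx : (Ideal.span {x}).radical = maximalIdeal R)
    (l : ℕ) (hl : IsLeast {i : ℕ | ∀ n ≥ i, colonPow R x n = colonPow R x i} l)
    (e : ℕ → ℤ)
    (he : ∃ N : ℤ, ∀ n ≥ N, hilbPoly 1 e n = hilbFn R (Ideal.span {x}) n) :
    e 1 = ∑ i ∈ Finset.range l,
      (modLength R (R ⧸ colonPow R x l) - modLength R (R ⧸ colonPow R x i)) := by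
  obtain ⟨N, hN⟩ := he
  have hstable : ∀ n ≥ l, colonPow R x n = colonPow R x l := hl.1
  set L : ℕ → ℤ := fun i => modLength R (R ⧸ colonPow R x i)
  set S := ∑ i ∈ Finset.range l, L i
  have hL : ∀ i ≥ l, L i = L l := fun i hi => by simp only [L]; rw [hstable i hi]
  have hilbFn_eq (d : ℕ) :
      hilbFn R (Ideal.span {x}) (l + d : ℕ) = ((S + d * L l : ℤ) : ℚ) := by
    rw [hilbFn, Int.toNat_natCast, modLength_quotient_span_pow hx,
      Finset.sum_range_add_eq_of_eventually_const hL, nsmul_eq_mul]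
  obtain ⟨d, hd⟩ : ∃ d : ℕ, N ≤ (l + d : ℕ) := ⟨N.toNat, by omega⟩
  have h₁ := hN _ hd
  have h₂ := hN (l + (d + 1) : ℕ) (by omega)
  rw [hilbPoly_one, hilbFn_eq] at h₁ h₂
  have he₁ : (e 1 : ℚ) = l * L l - S := by
    push_cast at h₁ h₂
    linear_combination (l + d : ℚ) * h₂ - (l + d + 1 : ℚ) * h₁
  rw [Finset.sum_sub_distrib, Finset.sum_const, Finset.card_range, nsmul_eq_mul]
  exact_mod_cast he₁

/-- In a one-dimensional Noetherian local ring with parameter ideal `q = (x)`,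
with `l` and `x̃` as above, the first Hilbert coefficient satisfies
`e₁(q) = ∑_{i=0}^{l-1} (λ_R(R/x̃) - λ_R(R/((x^{i+1}):x^i)))`. -/
theorem stmt1 (R : Type*) [CommRing R] [IsNoetherianRing R] [IsLocalRing R]
    (hdim : ringKrullDim R = 1) (x : R)
    (hx : (Ideal.span {x}).radical = maximalIdeal R)
    (l : ℕ) (hl : IsLeast {i : ℕ | ∀ n ≥ i, colonPow R x n = colonPow R x i} l)
    (e : ℕ → ℤ)
    (he : ∃ N : ℤ, ∀ n ≥ N, hilbPoly 1 e n = hilbFn R (Ideal.span {x}) n) :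
    e 1 = ∑ i ∈ Finset.range l,
      (modLength R (R ⧸ colonPow R x l) - modLength R (R ⧸ colonPow R x i)) :=
  stmt1_general R x hx l hl e he
end

section
/- Let (R,m) be a Noetherian local ring of dimension d and q a parameter ideal. For 0 ≤ i ≤ d−1: if the postulation number satisfies n(q) < i−d, then e_j(q) = 0 for all j with i ≤ j ≤ d. -/
/-!
For `n ≤ 0` we have `qⁿ = R`, so the Hilbert function vanishes; since `n(q) < i - d`, the
Hilbert–Samuel polynomial therefore vanishes at `j - d` for every `i ≤ j ≤ d`. At `n = j - d`
the binomial `binom(n+d-k-1, d-k) = binom(j-k-1, d-k)` is `0` for `k < j` and `(-1)^(d-j)`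
for `k = j`, so `P(j - d) = (-1)^d e_j` once `e_k = 0` for `j < k ≤ d`. Descending induction
from `j = d` gives `e_j = 0`.
-/

set_option synthInstance.maxHeartbeats 1000000
set_option maxHeartbeats 1000000

open IsLocalRing Polynomial

lemma modLength_eq_zero_of_subsingleton (R M : Type*) [CommRing R] [AddCommGroup M] [Module R M]
    [Subsingleton M] : modLength R M = 0 := by
  simp [modLength, Order.krullDim_eq_zero]

lemma hilbFn_eq_zero_of_nonpos (R : Type*) [CommRing R] (q : Ideal R) {n : ℤ} (hn : n ≤ 0) :
    hilbFn R q n = 0 := by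
  have : Subsingleton (R ⧸ q ^ n.toNat) := by
    rw [Int.toNat_of_nonpos hn, pow_zero, Ideal.one_eq_top]
    exact Ideal.Quotient.subsingleton_iff.mpr rfl
  simp [hilbFn, modLength_eq_zero_of_subsingleton]

lemma binomQ_neg_one (r : ℕ) : binomQ (-1) r = (-1) ^ r := by
  have hprod : ∏ j ∈ Finset.range r, ((-1 : ℚ) - j) = (-1) ^ r * r.factorial := by
    induction r with
    | zero => simp
    | succ n ih => rw [Finset.prod_range_succ, ih, Nat.factorial_succ]; push_cast; ring
  rw [binomQ, hprod, mul_div_assoc, div_self (by positivity), mul_one]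

lemma binomQ_natCast_of_lt {t r : ℕ} (h : t < r) : binomQ t r = 0 := by
  rw [binomQ, Finset.prod_eq_zero (Finset.mem_range.mpr h) (sub_self _), zero_div]

lemma hilbPoly_natCast_sub {d j : ℕ} (e : ℕ → ℤ) (hj : j ≤ d)
    (hvanish : ∀ k, j < k → k ≤ d → e k = 0) :
    hilbPoly d e (j - d) = (-1) ^ d * e j := by
  rw [hilbPoly, Finset.sum_eq_single j]
  · have harg : (((j : ℤ) - d : ℤ) : ℚ) + d - j - 1 = -1 := by push_cast; ring
    rw [harg, binomQ_neg_one, ← Nat.add_sub_cancel' hj, pow_add, Nat.add_sub_cancel_left]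
    ring
  · intro k hk hkj
    rcases lt_or_gt_of_ne hkj with hlt | hgt
    · have harg : (((j : ℤ) - d : ℤ) : ℚ) + d - k - 1 = ((j - (k + 1) : ℕ) : ℚ) := by
        rw [Nat.cast_sub hlt]; push_cast; ring
      rw [harg, binomQ_natCast_of_lt (by omega), mul_zero]
    · rw [hvanish k hgt (by simpa [Nat.lt_succ_iff] using hk)]
      simp
  · intro hj'
    exact absurd (Finset.mem_range.mpr (Nat.lt_succ_of_le hj)) hj'

lemma coeff_eq_zero_of_hilbPoly_natCast_sub_eq_zero {d i : ℕ} {e : ℕ → ℤ}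
    (hzero : ∀ j, i ≤ j → j ≤ d → hilbPoly d e (j - d) = 0) :
    ∀ j, i ≤ j → j ≤ d → e j = 0 := by
  intro j hij hjd
  induction hk : d - j using Nat.strong_induction_on generalizing j with
  | _ k ih =>
    have hvanish : ∀ l, j < l → l ≤ d → e l = 0 := fun l hjl hld =>
      ih (d - l) (by omega) l (by omega) hld rfl
    have h := hzero j hij hjd
    rw [hilbPoly_natCast_sub e hjd hvanish] at h
    exact_mod_cast (mul_eq_zero.mp h).resolve_left (pow_ne_zero _ (by norm_num))

theorem stmt15_general (R : Type*) [CommRing R]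
    (d : ℕ)
    (q : Ideal R)
    (e : ℕ → ℤ)
    (npq : ℤ)
    (hnpq : IsLeast {j : ℤ | ∀ n > j, hilbFn R q n = hilbPoly d e n} npq)
    (i : ℕ)
    (h : npq < (i : ℤ) - d) :
    ∀ j, i ≤ j → j ≤ d → e j = 0 := by
  refine coeff_eq_zero_of_hilbPoly_natCast_sub_eq_zero fun j hij hjd => ?_
  have hpost : npq < (j : ℤ) - d := by omega
  rw [← hnpq.1 _ hpost]
  exact hilbFn_eq_zero_of_nonpos R q (by omega)

/-- Let `R` be a Noetherian local ring of dimension `d` and `q` a parameter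
ideal.  For `0 ≤ i ≤ d-1`: if the postulation number satisfies `n(q) < i - d`, then
`e_j(q) = 0` for all `i ≤ j ≤ d`. -/
theorem stmt15 (R : Type*) [CommRing R] [IsNoetherianRing R] [IsLocalRing R]
    (d : ℕ) (hdim : ringKrullDim R = d)
    (q : Ideal R) (hq : IsParameterIdeal R d q)
    (e : ℕ → ℤ) (he : ∃ N : ℤ, ∀ n ≥ N, hilbPoly d e n = hilbFn R q n)
    (npq : ℤ)
    (hnpq : IsLeast {j : ℤ | ∀ n > j, hilbFn R q n = hilbPoly d e n} npq)
    (i : ℕ) (hi : i ≤ d - 1)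
    (h : npq < (i : ℤ) - d) :
    ∀ j, i ≤ j → j ≤ d → e j = 0 :=
  stmt15_general R d q e npq hnpq i h
end
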